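/- Fix D ≥ 0 and ε, δ ∈ [0,1), and assume G^δ_{D,ε}(X) < +∞. Then there exists a (D, R, ε, δ) code whose encoder is deterministic (a function f : 𝒳 → {0,1}*) with rate R = ⌊G^δ_{D,ε}(X) + (2 log₂ e) / 2^{G^δ_{D,ε}(X)}⌋. -/

import Mathlib

open scoped ENNReal
open MeasureTheory

noncomputable section

/-- The smooth max entropy `H^δ(P)` (base 2) of a probability distribution `P`
on a finite alphabet `𝒴`: the least `log₂ |𝒲|` over subsets `𝒲 ⊆ 𝒴` of
probability at least `1 - δ`. -/
def smoothMaxEnt {𝒴 : Type} [Fintype 𝒴] (P : 𝒴 → ℝ≥0∞) (δ : ℝ) : ℝ :=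
  sInf {r : ℝ | ∃ W : Finset 𝒴,
    ENNReal.ofReal (1 - δ) ≤ ∑ y ∈ W, P y ∧ r = Real.logb 2 (W.card)}

/-- A channel (conditional probability distribution) from `𝒳` to `𝒴`. -/
def IsChannel {𝒳 𝒴 : Type} [Fintype 𝒴] (W : 𝒳 → 𝒴 → ℝ≥0∞) : Prop :=
  ∀ x, ∑ y, W x y = 1

/-- The output marginal distribution of the channel `W` with input distribution `pX`. -/
def marginal {𝒳 𝒴 : Type} [Fintype 𝒳] (pX : 𝒳 → ℝ≥0∞) (W : 𝒳 → 𝒴 → ℝ≥0∞) : 𝒴 → ℝ≥0∞ :=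
  fun y => ∑ x, pX x * W x y

/-- `Pr{d(X,Y) > D}` for the joint law `pX · W`. -/
def chExcess {𝒳 𝒴 : Type} [Fintype 𝒳] [Fintype 𝒴] (pX : 𝒳 → ℝ≥0∞) (W : 𝒳 → 𝒴 → ℝ≥0∞)
    (d : 𝒳 → 𝒴 → ℝ) (D : ℝ) : ℝ≥0∞ :=
  ∑ x, ∑ y, if D < d x y then pX x * W x y else 0

/-- The quantity `G^δ_{D,ε}(X)` as a value in `[0,∞]`: the infimum of the smooth max
entropy of the output marginal, over channels whose excess-distortion probability is
at most `ε`; it equals `+∞` if no such channel exists. -/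
def Gq {𝒳 𝒴 : Type} [Fintype 𝒳] [Fintype 𝒴] (pX : 𝒳 → ℝ≥0∞) (d : 𝒳 → 𝒴 → ℝ)
    (D ε δ : ℝ) : ℝ≥0∞ :=
  ⨅ (W : 𝒳 → 𝒴 → ℝ≥0∞) (_ : IsChannel W) (_ : chExcess pX W d D ≤ ENNReal.ofReal ε),
    ENNReal.ofReal (smoothMaxEnt (marginal pX W) δ)

/-- `(f, g)` is a `(D, R, ε, δ)` code: `f` is a (possibly stochastic) encoder assigning
to each source symbol a probability distribution on binary strings (`List Bool`),
`g` is a decoder, the excess distortion probability is at most `ε`, and the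
overflow probability is at most `δ`. -/
def IsCode {𝒳 𝒴 : Type} [Fintype 𝒳] (pX : 𝒳 → ℝ≥0∞) (d : 𝒳 → 𝒴 → ℝ)
    (D R ε δ : ℝ) (f : 𝒳 → List Bool → ℝ≥0∞) (g : List Bool → 𝒴) : Prop :=
  (∀ x, ∑' w : List Bool, f x w = 1) ∧
  (∑ x, ∑' w : List Bool, (if D < d x (g w) then pX x * f x w else 0))
      ≤ ENNReal.ofReal ε ∧
  (∑ x, ∑' w : List Bool, (if R < (w.length : ℝ) then pX x * f x w else 0))
      ≤ ENNReal.ofReal δ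

/-- The deterministic encoder `f : 𝒳 → {0,1}*` viewed as a stochastic encoder. -/
def detEnc {𝒳 : Type} (f : 𝒳 → List Bool) : 𝒳 → List Bool → ℝ≥0∞ :=
  fun x w => if w = f x then 1 else 0

/-- The sum of the `j` largest values of `P`. -/
def topSum {𝒴 : Type} [Fintype 𝒴] (P : 𝒴 → ℝ≥0∞) (j : ℕ) : ℝ≥0∞ :=
  ⨆ (W : Finset 𝒴) (_ : W.card ≤ j), ∑ y ∈ W, P y


/-! Take a channel that nearly attains `G = G^δ_{D,ε}(X)` and a set `W₀` of at most `2^G` outputs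
of marginal mass `≥ 1 - δ`. A letter whose distortion ball meets `W₀` is reproduced inside `W₀`.
The letters whose ball is empty, or misses `W₀`, carry total mass at most `ε + δ`: under the
channel their output is either distorted or outside `W₀`. Among those with a nonempty ball,
greedily send as many as the budget `ε` allows to a fixed point of `W₀`, give one heaviest letter a
reproduction of its own and the rest long codewords; the heaviest letter is what makes the leftover
mass fit into `δ`. So at most `2^G + 1` reproductions need codewords of length `≤ R`, and there are
`2^(R + 1) - 1 > 2^G + 1` such strings. -/

open Finset

/-- Enumerates the binary strings by length, so that `natCode n` has length `≤ L` whenever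
`n + 1 < 2 ^ (L + 1)`. -/
def natCode (n : ℕ) : List Bool :=
  (Nat.digits 2 (n + 1)).dropLast.map (· = 1)

lemma length_natCode (n : ℕ) : (natCode n).length = Nat.log 2 (n + 1) := by
  rw [natCode, List.length_map, List.length_dropLast,
    Nat.length_digits 2 (n + 1) one_lt_two n.succ_ne_zero]
  rfl

lemma map_toNat_natCode_append (n : ℕ) :
    (natCode n).map Bool.toNat ++ [1] = Nat.digits 2 (n + 1) := by
  have hne : Nat.digits 2 (n + 1) ≠ [] := Nat.digits_ne_nil_iff_ne_zero.mpr n.succ_ne_zero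
  have hlast : (Nat.digits 2 (n + 1)).getLast hne = 1 := by
    have h0 : (Nat.digits 2 (n + 1)).getLast hne ≠ 0 :=
      Nat.getLast_digit_ne_zero 2 n.succ_ne_zero
    have h2 := Nat.digits_lt_base one_lt_two (List.getLast_mem hne)
    omega
  have hbits : ((Nat.digits 2 (n + 1)).dropLast).map (Bool.toNat ∘ (· = 1)) =
      (Nat.digits 2 (n + 1)).dropLast := by
    refine (List.map_congr_left fun a ha => ?_).trans (List.map_id _)
    have : a < 2 := Nat.digits_lt_base one_lt_two ((List.dropLast_sublist _).mem ha)
    interval_cases a <;> rfl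
  rw [natCode, List.map_map, hbits]
  conv_rhs => rw [← List.dropLast_append_getLast hne]
  rw [hlast]

lemma natCode_injective : Function.Injective natCode := fun a b h => by
  have := congrArg (fun w => w.map Bool.toNat ++ [1]) h
  simpa only [map_toNat_natCode_append, Nat.digits_inj_iff, add_left_inj] using this

lemma Finset.exists_injective_lt_card {α : Type} [Fintype α] [DecidableEq α] (A : Finset α) :
    ∃ e : α → ℕ, Function.Injective e ∧ ∀ a ∈ A, e a < A.card := by
  let e : α ≃ Fin (A.card + Fintype.card {a // a ∉ A}) :=
    (Equiv.sumCompl (· ∈ A)).symm.trans <|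
      (Equiv.sumCongr A.equivFin (Fintype.equivFin _)).trans finSumFinEquiv
  refine ⟨fun a => e a, Fin.val_injective.comp e.injective, fun a ha => ?_⟩
  simp [e, Equiv.sumCompl_symm_apply_of_pos ha]

lemma exists_injective_length_le {𝒴 : Type} [Fintype 𝒴] [DecidableEq 𝒴] (A : Finset 𝒴)
    (L : ℕ) (hA : A.card < 2 ^ (L + 1)) :
    ∃ enc : 𝒴 → List Bool, Function.Injective enc ∧ ∀ y ∈ A, (enc y).length ≤ L := by
  obtain ⟨e, he, heA⟩ := A.exists_injective_lt_card
  refine ⟨natCode ∘ e, natCode_injective.comp he, fun y hy => ?_⟩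
  rw [Function.comp_apply, length_natCode, ← Nat.lt_succ_iff]
  exact Nat.log_lt_of_lt_pow (Nat.succ_ne_zero _) (by have := heA y hy; omega)

lemma two_rpow_add_one_lt (g : ℝ) :
    (2 : ℝ) ^ g + 1 <
      2 ^ ((⌊g + 2 * Real.logb 2 (Real.exp 1) / (2 : ℝ) ^ g⌋ : ℤ) + 1 : ℝ) := by
  set t : ℝ := 2 ^ g
  set x := g + 2 * Real.logb 2 (Real.exp 1) / t
  have ht : 0 < t := by positivity
  have hlog2 : 0 < Real.log 2 := Real.log_pos one_lt_two
  -- `2 ^ (2 log₂ e / t) = e ^ (2 / t) ≥ 1 + 2 / t`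
  have hexp : Real.exp (2 / t) = 2 ^ (2 * Real.logb 2 (Real.exp 1) / t) := by
    rw [Real.rpow_def_of_pos two_pos, Real.logb, Real.log_exp]
    congr 1
    field_simp
  calc t + 1 < t * (2 / t + 1) := by field_simp; linarith
    _ ≤ t * Real.exp (2 / t) := by gcongr; exact Real.add_one_le_exp _
    _ = 2 ^ x := by rw [hexp, Real.rpow_add two_pos]
    _ < 2 ^ ((⌊x⌋ : ℤ) + 1 : ℝ) :=
      Real.rpow_lt_rpow_of_exponent_lt one_lt_two (Int.lt_floor_add_one x)

theorem exists_sum_le_and_sum_sdiff_le {α : Type} [DecidableEq α] (S : Finset α)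
    (p : α → ℝ≥0∞) {E a b : ℝ≥0∞} (ha : a ≠ ⊤) (hE : E ≤ a)
    (hS : E + ∑ x ∈ S, p x ≤ a + b) :
    ∃ V ⊆ S, V.card ≤ 1 ∧
      ∃ T ⊆ S \ V, E + ∑ x ∈ T, p x ≤ a ∧ ∑ x ∈ (S \ V) \ T, p x ≤ b := by
  rcases S.eq_empty_or_nonempty with rfl | hne
  · exact ⟨∅, subset_rfl, by simp, ∅, by simp, by simpa using hE, by simp⟩
  obtain ⟨x₀, hx₀, hmax⟩ := S.exists_max_image p hne
  set F := (S \ {x₀}).powerset.filter fun T => E + ∑ x ∈ T, p x ≤ a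
  obtain ⟨T, hTF, hTmax⟩ := F.exists_max_image card ⟨∅, by simpa [F] using hE⟩
  obtain ⟨hTsub, hTa⟩ : T ⊆ S \ {x₀} ∧ E + ∑ x ∈ T, p x ≤ a := by simpa [F] using hTF
  refine ⟨{x₀}, singleton_subset_iff.mpr hx₀, (card_singleton x₀).le, T, hTsub, hTa, ?_⟩
  rcases ((S \ {x₀}) \ T).eq_empty_or_nonempty with hR | ⟨z, hz⟩
  · simp [hR]
  obtain ⟨hzS, hzT⟩ := mem_sdiff.mp hz
  have hover : a ≤ E + ∑ x ∈ T, p x + p x₀ := by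
    have hz_not : ¬ E + ∑ x ∈ insert z T, p x ≤ a := fun h => by
      have := hTmax (insert z T) (by simpa [F, h] using insert_subset hzS hTsub)
      rw [card_insert_of_notMem hzT] at this
      omega
    rw [sum_insert hzT, not_le] at hz_not
    calc a ≤ E + (p z + ∑ x ∈ T, p x) := hz_not.le
      _ ≤ E + ∑ x ∈ T, p x + p x₀ := by
        rw [add_comm (p z), ← add_assoc]
        gcongr
        exact hmax z (mem_sdiff.mp hzS).1
  refine (ENNReal.add_le_add_iff_left ha).mp ?_
  calc a + ∑ x ∈ (S \ {x₀}) \ T, p x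
      ≤ E + ∑ x ∈ T, p x + p x₀ + ∑ x ∈ (S \ {x₀}) \ T, p x := by gcongr
    _ = E + ∑ x ∈ S, p x := by
      rw [← sum_sdiff (singleton_subset_iff.mpr hx₀), ← sum_sdiff hTsub, sum_singleton]
      ring
    _ ≤ a + b := hS

lemma le_chExcess_add_sum_compl {𝒳 𝒴 : Type} [Fintype 𝒴] [DecidableEq 𝒴] (pX : 𝒳 → ℝ≥0∞)
    {W : 𝒳 → 𝒴 → ℝ≥0∞} (hW : IsChannel W) (d : 𝒳 → 𝒴 → ℝ) (D : ℝ) {x : 𝒳} {s : Finset 𝒴}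
    (hs : ∀ y ∈ s, D < d x y) :
    pX x ≤ (∑ y, if D < d x y then pX x * W x y else 0) + ∑ y ∈ sᶜ, pX x * W x y := by
  calc pX x = ∑ y ∈ s, pX x * W x y + ∑ y ∈ sᶜ, pX x * W x y := by
        rw [sum_add_sum_compl, ← mul_sum, hW x, mul_one]
    _ = ∑ y ∈ s, (if D < d x y then pX x * W x y else 0) + ∑ y ∈ sᶜ, pX x * W x y := by
        rw [sum_congr rfl fun y hy => if_pos (hs y hy)]
    _ ≤ _ := by gcongr; exact subset_univ s

lemma exists_reproduction_preferring {𝒳 𝒴 : Type} (d : 𝒳 → 𝒴 → ℝ) (D : ℝ) {W₀ : Finset 𝒴}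
    (hW₀ : W₀.Nonempty) :
    ∃ y : 𝒳 → 𝒴, ∀ x, (y x ∉ W₀ → ∀ y' ∈ W₀, D < d x y') ∧
      (D < d x (y x) → y x ∈ W₀ ∧ ∀ y', D < d x y') := by
  classical
  choose y hy using fun x => show ∃ y : 𝒴, (y ∉ W₀ → ∀ y' ∈ W₀, D < d x y') ∧
      (D < d x y → y ∈ W₀ ∧ ∀ y', D < d x y') by
    by_cases h₀ : ∃ y ∈ W₀, d x y ≤ D
    · obtain ⟨y, hy, hxy⟩ := h₀
      exact ⟨y, fun h => absurd hy h, fun h => absurd hxy (not_le.mpr h)⟩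
    push Not at h₀
    by_cases h₁ : ∃ y, d x y ≤ D
    · obtain ⟨y, hxy⟩ := h₁
      exact ⟨y, fun _ => h₀, fun h => absurd hxy (not_le.mpr h)⟩
    push Not at h₁
    obtain ⟨w, hw⟩ := hW₀
    exact ⟨w, fun h => absurd hw h, fun _ => ⟨hw, h₁⟩⟩
  exact ⟨y, hy⟩

section Channel

variable {𝒳 𝒴 : Type} [Fintype 𝒳] [Fintype 𝒴]

lemma sum_marginal {pX : 𝒳 → ℝ≥0∞} (hpX : ∑ x, pX x = 1) {W : 𝒳 → 𝒴 → ℝ≥0∞}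
    (hW : IsChannel W) : ∑ y, marginal pX W y = 1 := by
  simp only [marginal]
  rw [sum_comm]
  simp only [← mul_sum, hW _, mul_one, hpX]

lemma sum_compl_le_of_one_sub_le_sum [DecidableEq 𝒴] {P : 𝒴 → ℝ≥0∞} (hP : ∑ y, P y = 1)
    {δ : ℝ} {W₀ : Finset 𝒴} (hW₀ : ENNReal.ofReal (1 - δ) ≤ ∑ y ∈ W₀, P y) :
    ∑ y ∈ W₀ᶜ, P y ≤ ENNReal.ofReal δ := by
  refine (ENNReal.add_le_add_iff_left (ENNReal.ofReal_ne_top (r := 1 - δ))).mp ?_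
  calc ENNReal.ofReal (1 - δ) + ∑ y ∈ W₀ᶜ, P y ≤ ∑ y ∈ W₀, P y + ∑ y ∈ W₀ᶜ, P y := by gcongr
    _ = ENNReal.ofReal (1 - δ + δ) := by rw [sum_add_sum_compl, hP]; simp
    _ ≤ ENNReal.ofReal (1 - δ) + ENNReal.ofReal δ := ENNReal.ofReal_add_le

lemma exists_smoothMaxEnt_eq {P : 𝒴 → ℝ≥0∞} (hP : ∑ y, P y = 1) {δ : ℝ} (hδ : 0 ≤ δ) :
    ∃ W₀ : Finset 𝒴, ENNReal.ofReal (1 - δ) ≤ ∑ y ∈ W₀, P y ∧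
      smoothMaxEnt P δ = Real.logb 2 W₀.card := by
  have hne : {r : ℝ | ∃ W : Finset 𝒴,
      ENNReal.ofReal (1 - δ) ≤ ∑ y ∈ W, P y ∧ r = Real.logb 2 W.card}.Nonempty :=
    ⟨_, univ, by rw [hP]; exact ENNReal.ofReal_le_one.mpr (by linarith), rfl⟩
  have hfin : {r : ℝ | ∃ W : Finset 𝒴,
      ENNReal.ofReal (1 - δ) ≤ ∑ y ∈ W, P y ∧ r = Real.logb 2 W.card}.Finite :=
    (Set.finite_range fun W : Finset 𝒴 => Real.logb 2 W.card).subset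
      fun _ ⟨W, _, hr⟩ => ⟨W, hr.symm⟩
  exact hne.csInf_mem hfin

lemma exists_channel_of_Gq_lt {pX : 𝒳 → ℝ≥0∞} {d : 𝒳 → 𝒴 → ℝ} {D ε δ : ℝ} {c : ℝ≥0∞}
    (h : Gq pX d D ε δ < c) :
    ∃ W, IsChannel W ∧ chExcess pX W d D ≤ ENNReal.ofReal ε ∧
      ENNReal.ofReal (smoothMaxEnt (marginal pX W) δ) < c := by
  simpa only [Gq, iInf_lt_iff, exists_prop] using h

lemma exists_channel_card_le_two_rpow {pX : 𝒳 → ℝ≥0∞} (hpX : ∑ x, pX x = 1)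
    {d : 𝒳 → 𝒴 → ℝ} {D ε δ : ℝ} (hδ : 0 ≤ δ) (hG : Gq pX d D ε δ ≠ ⊤) :
    ∃ W, IsChannel W ∧ chExcess pX W d D ≤ ENNReal.ofReal ε ∧
      ∃ W₀ : Finset 𝒴, ENNReal.ofReal (1 - δ) ≤ ∑ y ∈ W₀, marginal pX W y ∧
        (W₀.card : ℝ) ≤ 2 ^ (Gq pX d D ε δ).toReal := by
  set g := (Gq pX d D ε δ).toReal
  set m := ⌊(2 : ℝ) ^ g⌋₊
  have hm : (2 : ℝ) ^ g < m + 1 := Nat.lt_floor_add_one _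
  have hgm : g < Real.logb 2 (m + 1) :=
    (Real.lt_logb_iff_rpow_lt one_lt_two (by positivity)).mpr hm
  have hGm : Gq pX d D ε δ < ENNReal.ofReal (Real.logb 2 (m + 1)) := by
    rwa [← ENNReal.ofReal_toReal hG,
      ENNReal.ofReal_lt_ofReal_iff (ENNReal.toReal_nonneg.trans_lt hgm)]
  obtain ⟨W, hW, hexc, hent⟩ := exists_channel_of_Gq_lt hGm
  obtain ⟨W₀, hmass, hW₀⟩ := exists_smoothMaxEnt_eq (sum_marginal hpX hW) hδ
  refine ⟨W, hW, hexc, W₀, hmass, (Nat.le_floor_iff (by positivity)).mp ?_⟩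
  have hlt : Real.logb 2 W₀.card < Real.logb 2 (m + 1) :=
    hW₀ ▸ (ENNReal.ofReal_lt_ofReal_iff'.mp hent).1
  rcases Nat.eq_zero_or_pos W₀.card with h0 | hpos
  · simp [h0]
  have := (Real.logb_lt_logb_iff one_lt_two (by exact_mod_cast hpos) (by positivity)).mp hlt
  exact Nat.lt_succ_iff.mp (by exact_mod_cast this)

theorem exists_reproduction [DecidableEq 𝒴] (pX : 𝒳 → ℝ≥0∞)
    {W : 𝒳 → 𝒴 → ℝ≥0∞} (hW : IsChannel W) (d : 𝒳 → 𝒴 → ℝ) (D : ℝ) {a b : ℝ≥0∞} (ha : a ≠ ⊤)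
    (hexc : chExcess pX W d D ≤ a) {W₀ : Finset 𝒴} (hW₀ : W₀.Nonempty)
    (hleak : ∑ y ∈ W₀ᶜ, marginal pX W y ≤ b) :
    ∃ (y : 𝒳 → 𝒴) (A : Finset 𝒴), A.card ≤ W₀.card + 1 ∧
      ∑ x with D < d x (y x), pX x ≤ a ∧ ∑ x with y x ∉ A, pX x ≤ b := by
  classical
  obtain ⟨w₀, hw₀⟩ := hW₀
  obtain ⟨y₀, hy₀⟩ := exists_reproduction_preferring d D ⟨w₀, hw₀⟩
  set C := univ.filter fun x => D < d x (y₀ x)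
  set S := univ.filter fun x => y₀ x ∉ W₀
  set e := fun x => ∑ y, if D < d x y then pX x * W x y else 0
  set r := fun x => ∑ y ∈ W₀ᶜ, pX x * W x y
  have hdisj : Disjoint C S := disjoint_filter.mpr fun x _ hC hS => hS ((hy₀ x).2 hC).1
  have hCe : ∀ x ∈ C, pX x ≤ e x := fun x hx => by
    simpa [r] using le_chExcess_add_sum_compl pX hW d D (s := univ)
      fun y _ => ((hy₀ x).2 (mem_filter.mp hx).2).2 y
  have hCSe : ∀ x ∈ C ∪ S, pX x ≤ e x + r x := fun x hx => by
    refine le_chExcess_add_sum_compl pX hW d D fun y hy => ?_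
    rcases mem_union.mp hx with hxC | hxS
    · exact ((hy₀ x).2 (mem_filter.mp hxC).2).2 y
    · exact (hy₀ x).1 (mem_filter.mp hxS).2 y hy
  have hC : ∑ x ∈ C, pX x ≤ a :=
    ((sum_le_sum hCe).trans (sum_le_sum_of_subset (subset_univ C))).trans hexc
  have hCS : ∑ x ∈ C, pX x + ∑ x ∈ S, pX x ≤ a + b := by
    have hr : ∑ x, r x = ∑ y ∈ W₀ᶜ, marginal pX W y := sum_comm
    calc ∑ x ∈ C, pX x + ∑ x ∈ S, pX x = ∑ x ∈ C ∪ S, pX x := (sum_union hdisj).symm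
      _ ≤ ∑ x ∈ C ∪ S, (e x + r x) := sum_le_sum hCSe
      _ ≤ ∑ x, (e x + r x) := sum_le_sum_of_subset (subset_univ _)
      _ ≤ a + b := by rw [sum_add_distrib, hr]; exact add_le_add hexc hleak
  obtain ⟨V, hVS, hV, T, hT, hTa, hrest⟩ := exists_sum_le_and_sum_sdiff_le S pX ha hC hCS
  have hTS : T ⊆ S := hT.trans sdiff_subset
  refine ⟨fun x => if x ∈ T then w₀ else y₀ x, W₀ ∪ V.image y₀,
    (card_union_le _ _).trans (by have := card_image_le (s := V) (f := y₀); omega), ?_, ?_⟩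
  · calc ∑ x with D < d x (if x ∈ T then w₀ else y₀ x), pX x
        ≤ ∑ x ∈ C ∪ T, pX x := by
          refine sum_le_sum_of_subset fun x hx => ?_
          by_cases hxT : x ∈ T
          · exact mem_union_right _ hxT
          · simpa [C, hxT] using hx
      _ = ∑ x ∈ C, pX x + ∑ x ∈ T, pX x := sum_union (hdisj.mono_right hTS)
      _ ≤ a := hTa
  · calc ∑ x with (if x ∈ T then w₀ else y₀ x) ∉ W₀ ∪ V.image y₀, pX x
        ≤ ∑ x ∈ (S \ V) \ T, pX x := by
          refine sum_le_sum_of_subset fun x hx => ?_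
          by_cases hxT : x ∈ T
          · simp [hxT, hw₀] at hx
          · have hx' : y₀ x ∉ W₀ ∧ y₀ x ∉ V.image y₀ := by simpa [hxT] using hx
            have hxV : x ∉ V := fun h => hx'.2 (mem_image_of_mem y₀ h)
            simp [S, hx'.1, hxV, hxT]
      _ ≤ b := hrest

end Channel

lemma tsum_ite_mul_detEnc {𝒳 : Type} (f : 𝒳 → List Bool) (x : 𝒳) (P : List Bool → Prop)
    [DecidablePred P] (c : ℝ≥0∞) :
    ∑' w, (if P w then c * detEnc f x w else 0) = if P (f x) then c else 0 := by
  rw [tsum_eq_single (f x) fun w hw => by simp [detEnc, hw]]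
  simp [detEnc]

lemma isCode_detEnc_iff {𝒳 𝒴 : Type} [Fintype 𝒳] (pX : 𝒳 → ℝ≥0∞) (d : 𝒳 → 𝒴 → ℝ)
    (D R ε δ : ℝ) (f : 𝒳 → List Bool) (g : List Bool → 𝒴) :
    IsCode pX d D R ε δ (detEnc f) g ↔
      ∑ x with D < d x (g (f x)), pX x ≤ ENNReal.ofReal ε ∧
        ∑ x with R < (f x).length, pX x ≤ ENNReal.ofReal δ := by
  have hf : ∀ x, ∑' w, detEnc f x w = 1 := fun x => tsum_ite_eq (f x) 1
  simp only [IsCode, tsum_ite_mul_detEnc, sum_filter, hf, implies_true, true_and]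

theorem stmt3_general {𝒳 𝒴 : Type} [Fintype 𝒳] [Fintype 𝒴]
    (pX : 𝒳 → ℝ≥0∞) (hpX : ∑ x, pX x = 1)
    (d : 𝒳 → 𝒴 → ℝ)
    (D ε δ : ℝ) (hδ : 0 ≤ δ ∧ δ < 1)
    (hG : Gq pX d D ε δ ≠ ⊤) :
    ∃ (f : 𝒳 → List Bool) (g : List Bool → 𝒴),
      IsCode pX d D
        ((⌊(Gq pX d D ε δ).toReal +
            2 * Real.logb 2 (Real.exp 1) / (2 : ℝ) ^ (Gq pX d D ε δ).toReal⌋ : ℤ) : ℝ)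
        ε δ (detEnc f) g := by
  classical
  set g := (Gq pX d D ε δ).toReal
  obtain ⟨L, hL⟩ : ∃ L : ℕ, (L : ℤ) = ⌊g + 2 * Real.logb 2 (Real.exp 1) / (2 : ℝ) ^ g⌋ := by
    have : 0 ≤ Real.logb 2 (Real.exp 1) :=
      Real.logb_nonneg one_lt_two (Real.one_le_exp zero_le_one)
    exact ⟨_, Int.toNat_of_nonneg (Int.floor_nonneg.mpr (by positivity))⟩
  obtain ⟨W, hW, hexc, W₀, hmass, hcard⟩ := exists_channel_card_le_two_rpow hpX hδ.1 hG
  have hW₀ : W₀.Nonempty :=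
    nonempty_of_sum_ne_zero ((ENNReal.ofReal_pos.mpr (by linarith)).trans_le hmass).ne'
  obtain ⟨y, A, hA, hdist, hlong⟩ := exists_reproduction pX hW d D ENNReal.ofReal_ne_top hexc
    hW₀ (sum_compl_le_of_one_sub_le_sum (sum_marginal hpX hW) hmass)
  have hAL : A.card < 2 ^ (L + 1) := by
    have hrate := two_rpow_add_one_lt g
    rw [← hL] at hrate
    have : (A.card : ℝ) < 2 ^ (L + 1) := calc
      (A.card : ℝ) ≤ W₀.card + 1 := by exact_mod_cast hA
      _ ≤ 2 ^ g + 1 := by gcongr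
      _ < 2 ^ ((L : ℤ) + 1 : ℝ) := hrate
      _ = 2 ^ (L + 1) := by rw [← Real.rpow_natCast]; push_cast; rfl
    exact_mod_cast this
  obtain ⟨enc, henc, hshort⟩ := exists_injective_length_le A L hAL
  have : Nonempty 𝒴 := hW₀.to_type
  refine ⟨enc ∘ y, Function.invFun enc, (isCode_detEnc_iff ..).mpr ⟨?_, ?_⟩⟩
  · simpa only [Function.comp_apply, Function.leftInverse_invFun henc _] using hdist
  · refine le_trans (sum_le_sum_of_subset fun x hx => ?_) hlong
    rw [← hL, mem_filter] at hx
    refine mem_filter.mpr ⟨mem_univ x, fun hyA => hx.2.not_ge ?_⟩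
    exact_mod_cast hshort (y x) hyA

/-- Achievability with a deterministic encoder: if `G^δ_{D,ε}(X) < ∞`, there is a
deterministic `(D, R, ε, δ)` code with rate
`R = ⌊G^δ_{D,ε}(X) + (2 log₂ e) / 2^{G^δ_{D,ε}(X)}⌋`. -/
theorem stmt3 {𝒳 𝒴 : Type} [Fintype 𝒳] [Fintype 𝒴] [Nonempty 𝒳] [Nonempty 𝒴]
    (pX : 𝒳 → ℝ≥0∞) (hpX : ∑ x, pX x = 1)
    (d : 𝒳 → 𝒴 → ℝ) (hd : ∀ x y, 0 ≤ d x y)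
    (D ε δ : ℝ) (hD : 0 ≤ D) (hε : 0 ≤ ε ∧ ε < 1) (hδ : 0 ≤ δ ∧ δ < 1)
    (hG : Gq pX d D ε δ ≠ ⊤) :
    ∃ (f : 𝒳 → List Bool) (g : List Bool → 𝒴),
      IsCode pX d D
        ((⌊(Gq pX d D ε δ).toReal +
            2 * Real.logb 2 (Real.exp 1) / (2 : ℝ) ^ (Gq pX d D ε δ).toReal⌋ : ℤ) : ℝ)
        ε δ (detEnc f) g :=
  stmt3_general pX hpX d D ε δ hδ hG
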